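/- Let q be a prime power, m a positive integer with m ≤ q, and d := gcd(C(m,2), q−1). Then for every λ ∈ F_q with λ ≠ 0, the number of distinguished points x ∈ F_q^m with v_m(x) = λ is at most d·P(q,m)/(q−1), i.e., (q−1)·#{x ∈ F_q^m distinguished : v_m(x) = λ} ≤ d·P(q,m). -/

import Mathlib

open MvPolynomial

/-- The Vandermonde polynomial `v_m = ∏_{i<j} (x_i - x_j)` in `m` variables. -/
noncomputable def vand (K : Type*) [CommRing K] (m : ℕ) : MvPolynomial (Fin m) K :=
  ∏ p ∈ Finset.univ.filter (fun p : Fin m × Fin m => p.1 < p.2), (X p.1 - X p.2)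

/-- `P(q,m) = C(q,m)·m!` (which is `0` when `m > q`). -/
def Pnum (q m : ℕ) : ℕ := q.choose m * m.factorial

-- card of the index set of vand
lemma card_lt_pairs (m : ℕ) :
    (Finset.univ.filter (fun p : Fin m × Fin m => p.1 < p.2)).card = m.choose 2 := by
  classical
  rw [Finset.card_eq_sum_card_fiberwise (f := Prod.snd) (t := Finset.univ) (fun p _ => Finset.mem_univ _)]
  have h : ∀ j : Fin m,
      ((Finset.univ.filter (fun p : Fin m × Fin m => p.1 < p.2)).filter
        (fun p => p.2 = j)).card = (j : ℕ) := by
    intro j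
    rw [← Fin.card_Iio (b := j)]
    apply Finset.card_bij (fun p _ => p.1)
    · intro p hp
      simp only [Finset.mem_filter, Finset.mem_univ, true_and] at hp
      simp [Finset.mem_Iio, hp.2 ▸ hp.1]
    · intro p hp p' hp' h
      simp only [Finset.mem_filter, Finset.mem_univ, true_and] at hp hp'
      exact Prod.ext h (hp.2.trans hp'.2.symm)
    · intro i hi
      exact ⟨(i, j), by simpa using Finset.mem_Iio.mp hi, rfl⟩
  simp only [h]
  rw [Fin.sum_univ_eq_sum_range (fun i => i), Finset.sum_range_id, Nat.choose_two_right]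

-- homogeneity of vand
lemma vand_smul {F : Type} [Field F] (m : ℕ) (a : F) (y : Fin m → F) :
    eval (fun i => a * y i) (vand F m) = a ^ m.choose 2 * eval y (vand F m) := by
  classical
  rw [vand, map_prod, map_prod, ← card_lt_pairs m, ← Finset.prod_const, ← Finset.prod_mul_distrib]
  apply Finset.prod_congr rfl
  intro p _
  simp [mul_sub]

lemma roots_card {F : Type} [Field F] [Fintype F] [DecidableEq F] (d : ℕ) (hd : 0 < d) :
    (Finset.univ.filter (fun u : Fˣ => u ^ d = 1)).card ≤ d := by
  calc (Finset.univ.filter (fun u : Fˣ => u ^ d = 1)).card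
      ≤ (Polynomial.nthRoots d (1 : F)).toFinset.card := by
        apply Finset.card_le_card_of_injOn Units.val
        · intro u hu
          rw [Finset.mem_coe] at hu ⊢
          simp only [Finset.mem_filter, Finset.mem_univ, true_and] at hu
          rw [Multiset.mem_toFinset, Polynomial.mem_nthRoots hd]
          rw [← Units.val_pow_eq_pow_val, hu, Units.val_one]
        · intro u _ v _ h; exact Units.ext h
    _ ≤ Multiset.card (Polynomial.nthRoots d (1 : F)) := Multiset.toFinset_card_le _
    _ ≤ d := Polynomial.card_nthRoots d 1


/-- With `d = gcd(C(m,2), q-1)`, each nonzero `λ ∈ F_q` has at most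
`d·P(q,m)/(q-1)` distinguished preimages under `v_m`. -/
theorem stmt8 (q m : ℕ) (F : Type) [Field F] [Fintype F]
    (hcard : Fintype.card F = q) (hm : 0 < m) (hmq : m ≤ q)
    (lam : F) (hlam : lam ≠ 0) :
    (q - 1) * Set.ncard {x : Fin m → F | Function.Injective x ∧
        eval x (vand F m) = lam}
      ≤ Nat.gcd (m.choose 2) (q - 1) * Pnum q m := by
  classical
  set N := m.choose 2 with hN
  set d := Nat.gcd N (q - 1) with hd
  have hq2 : 2 ≤ q := hcard ▸ Fintype.one_lt_card
  have hq1 : 0 < q - 1 := by omega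
  have hdpos : 0 < d := Nat.gcd_pos_of_pos_right _ hq1
  have hcu : Fintype.card Fˣ = q - 1 := by
    rw [Fintype.card_units, hcard]
  -- the fiber finset
  set S : Finset (Fin m → F) :=
    Finset.univ.filter (fun x => Function.Injective x ∧ eval x (vand F m) = lam) with hS
  have hset : {x : Fin m → F | Function.Injective x ∧ eval x (vand F m) = lam} = ↑S := by
    ext x; simp [hS]
  rw [hset, Set.ncard_coe_finset]
  -- the distinguished finset
  set D : Finset (Fin m → F) := Finset.univ.filter (fun x => Function.Injective x) with hD
  have hDcard : D.card = Pnum q m := by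
    have : D.card = Fintype.card {x : Fin m → F // Function.Injective x} :=
      (Fintype.card_subtype _).symm
    rw [this, Fintype.card_congr (Equiv.subtypeInjectiveEquivEmbedding (Fin m) F),
      Fintype.card_embedding_eq, Fintype.card_fin, hcard,
      Nat.descFactorial_eq_factorial_mul_choose, Pnum, mul_comm]
  -- the scaling map
  set f : Fˣ × (Fin m → F) → (Fin m → F) := fun p => fun i => (p.1 : F) * p.2 i with hf
  set s : Finset (Fˣ × (Fin m → F)) := Finset.univ ×ˢ S with hs
  have himg : s.image f ⊆ D := by
    intro y hy
    rw [Finset.mem_image] at hy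
    obtain ⟨⟨c, x⟩, hp, rfl⟩ := hy
    rw [hs, Finset.mem_product, hS, Finset.mem_filter] at hp
    rw [hD, Finset.mem_filter]
    refine ⟨Finset.mem_univ _, fun i j hij => hp.2.2.1 ?_⟩
    exact mul_left_cancel₀ (Units.ne_zero c) hij
  -- fiber bound
  have hfib : ∀ y ∈ s.image f, (s.filter (fun p => f p = y)).card ≤ d := by
    intro y hy
    -- each fiber injects (via fst) into {c : Fˣ | (c:F)^N = eval y (vand F m) * lam⁻¹}
    set μ : F := eval y (vand F m) * lam⁻¹ with hμ
    have step1 : (s.filter (fun p => f p = y)).card ≤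
        (Finset.univ.filter (fun c : Fˣ => (c : F) ^ N = μ)).card := by
      apply Finset.card_le_card_of_injOn Prod.fst
      · rintro ⟨c, x⟩ hp
        rw [Finset.mem_coe] at hp ⊢
        rw [Finset.mem_filter, hs, Finset.mem_product, hS, Finset.mem_filter] at hp
        obtain ⟨⟨-, -, hinj, hev⟩, hfy⟩ := hp
        simp only [Finset.mem_filter, Finset.mem_univ, true_and]
        have : eval y (vand F m) = (c : F) ^ N * lam := by
          rw [← hfy]; simpa [hf, hev] using vand_smul m (c : F) x
        rw [hμ, this, mul_assoc, mul_inv_cancel₀ hlam, mul_one]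
      · rintro ⟨c, x⟩ hp ⟨c', x'⟩ hp' (h : c = c')
        subst h
        rw [Finset.mem_coe, Finset.mem_filter] at hp hp'
        have hx : f (c, x) = f (c, x') := hp.2.trans hp'.2.symm
        refine Prod.ext rfl (funext fun i => ?_)
        exact mul_left_cancel₀ (Units.ne_zero c) (congrFun hx i)
    refine step1.trans ?_
    rcases (Finset.univ.filter (fun c : Fˣ => (c : F) ^ N = μ)).eq_empty_or_nonempty with he | ⟨c₀, hc₀⟩
    · simp [he]
    · rw [Finset.mem_filter] at hc₀
      calc (Finset.univ.filter (fun c : Fˣ => (c : F) ^ N = μ)).card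
          ≤ (Finset.univ.filter (fun u : Fˣ => u ^ d = 1)).card := by
            apply Finset.card_le_card_of_injOn (fun c => c * c₀⁻¹)
            · intro c hc
              rw [Finset.mem_coe] at hc ⊢
              rw [Finset.mem_filter] at hc
              simp only [Finset.mem_filter, Finset.mem_univ, true_and]
              have hN1 : (c * c₀⁻¹) ^ N = 1 := by
                apply Units.ext
                push_cast
                rw [mul_pow, hc.2, ← hc₀.2]
                field_simp
                rw [← mul_pow, mul_one_div_cancel (Units.ne_zero c₀), one_pow]
              have : orderOf (c * c₀⁻¹) ∣ d :=
                Nat.dvd_gcd (orderOf_dvd_of_pow_eq_one hN1)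
                  (orderOf_dvd_of_pow_eq_one (hcu ▸ pow_card_eq_one))
              exact orderOf_dvd_iff_pow_eq_one.mp this
            · intro a _ b _ h; exact mul_right_cancel h
        _ ≤ d := roots_card d hdpos
  -- put it together
  have hmain : s.card ≤ d * (s.image f).card := Finset.card_le_mul_card_image s d hfib
  have hscard : s.card = (q - 1) * S.card := by
    rw [hs, Finset.card_product, Finset.card_univ, hcu]
  calc (q - 1) * S.card = s.card := hscard.symm
    _ ≤ d * (s.image f).card := hmain
    _ ≤ d * D.card := Nat.mul_le_mul_left d (Finset.card_le_card himg)
    _ = d * Pnum q m := by rw [hDcard]
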